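/- arXiv:1306.0800 — 2 statements merged into one kernel-verified Lean document; each statement's English description precedes it below -/
import Mathlib

section
/- Let H be a complex Hilbert space, D ⊆ H a linear subspace, and X_1,…,X_n linear operators mapping D into D, each of which is Hermitian or skew-Hermitian on D. Let m^{(1)},…,m^{(n)} be sequences of positive reals each satisfying (A2) with constant H > 0. Then for u ∈ D the following are equivalent: (i) there exist constants C, A > 0 with ‖X_α u‖ ≤ C A^{|α|} m_α for all α ∈ M(n); (ii) there exist constants C, A > 0 with |⟨X_α u, u⟩| ≤ C A^{|α|} m_α for all α ∈ M(n). -/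
open scoped ComplexInnerProductSpace

noncomputable section

/-- For a word `α = (i₁, …, i_k)` (a list over the index type), `applyWord X α u` is
`X_{i₁} (X_{i₂} ( ⋯ (X_{i_k} u)))`, i.e. the composition `X_α = X_{i₁} ∘ ⋯ ∘ X_{i_k}`
applied to `u`. -/
def applyWord {E : Type*} [NormedAddCommGroup E] [InnerProductSpace ℂ E] {ι : Type*}
    (X : ι → E →ₗ[ℂ] E) (α : List ι) (u : E) : E :=
  α.foldr (fun i v => X i v) u

lemma applyWord_cons {E : Type*} [NormedAddCommGroup E] [InnerProductSpace ℂ E] {ι : Type*}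
    (X : ι → E →ₗ[ℂ] E) (i : ι) (α : List ι) (u : E) :
    applyWord X (i :: α) u = X i (applyWord X α u) := rfl

lemma applyWord_append {E : Type*} [NormedAddCommGroup E] [InnerProductSpace ℂ E] {ι : Type*}
    (X : ι → E →ₗ[ℂ] E) (α β : List ι) (u : E) :
    applyWord X (α ++ β) u = applyWord X α (applyWord X β u) := by
  simp [applyWord, List.foldr_append]

lemma sum_count_eq_length {n : ℕ} (α : List (Fin n)) : ∑ j, α.count j = α.length := by
  rw [← List.sum_toFinset_count_eq_length]
  exact (Finset.sum_subset (Finset.subset_univ _)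
    (fun x _ hx => by simpa [List.count_eq_zero] using hx)).symm

/-- Lemma 2.3. Let `X_1, …, X_n` be Hermitian or skew-Hermitian
operators on a common invariant domain `D` of a complex Hilbert space, and let the
sequences `m^{(j)}` satisfy (A2) with constant `H > 0`.  Then a vector `u ∈ D` satisfies
`‖X_α u‖ ≤ C A^{|α|} 𝐦_α` (for some `C, A > 0`, all words `α ∈ M(n)`) iff it satisfies
`|⟨X_α u, u⟩| ≤ C A^{|α|} 𝐦_α` (for some `C, A > 0`, all words `α ∈ M(n)`). -/
theorem gsr_norm_iff_inner
    {E : Type*} [NormedAddCommGroup E] [InnerProductSpace ℂ E] [CompleteSpace E]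
    (n : ℕ) (hn : 1 ≤ n) (D : Submodule ℂ E)
    (X : Fin n → E →ₗ[ℂ] E)
    (hXD : ∀ i, ∀ x ∈ D, X i x ∈ D)
    (hherm : ∀ i, (∀ u ∈ D, ∀ v ∈ D, ⟪X i u, v⟫ = ⟪u, X i v⟫) ∨
                  (∀ u ∈ D, ∀ v ∈ D, ⟪X i u, v⟫ = -⟪u, X i v⟫))
    (m : Fin n → ℕ → ℝ) (hmpos : ∀ i p, 0 < m i p)
    (H : ℝ) (hH : 0 < H)
    (hA2 : ∀ i p q, m i (p + q) ≤ H ^ (p + q) * m i p * m i q)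
    (u : E) (hu : u ∈ D) :
    (∃ C A : ℝ, 0 < C ∧ 0 < A ∧ ∀ α : List (Fin n), α ≠ [] →
        ‖applyWord X α u‖ ≤ C * A ^ α.length * ∏ j, m j (α.count j)) ↔
    (∃ C A : ℝ, 0 < C ∧ 0 < A ∧ ∀ α : List (Fin n), α ≠ [] →
        ‖⟪applyWord X α u, u⟫‖ ≤ C * A ^ α.length * ∏ j, m j (α.count j)) := by
  have hmem : ∀ (α : List (Fin n)) (v : E), v ∈ D → applyWord X α v ∈ D := by
    intro α
    induction α with
    | nil => exact fun v hv => hv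
    | cons i rest ih => exact fun v hv => hXD i _ (ih v hv)
  -- moving a word to the other side of the inner product preserves absolute value
  have habs : ∀ (α : List (Fin n)) (v w : E), v ∈ D → w ∈ D →
      ‖⟪applyWord X α v, w⟫‖ = ‖⟪v, applyWord X α.reverse w⟫‖ := by
    intro α
    induction α with
    | nil => intro v w _ _; rfl
    | cons i rest ih =>
      intro v w hv hw
      have h1 : ‖⟪X i (applyWord X rest v), w⟫‖
          = ‖⟪applyWord X rest v, X i w⟫‖ := by
        rcases hherm i with h | h
        · rw [h _ (hmem rest v hv) _ hw]
        · rw [h _ (hmem rest v hv) _ hw, norm_neg]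
      calc ‖⟪applyWord X (i :: rest) v, w⟫‖
          = ‖⟪applyWord X rest v, X i w⟫‖ := by rw [applyWord_cons]; exact h1
        _ = ‖⟪v, applyWord X rest.reverse (X i w)⟫‖ := ih v (X i w) hv (hXD i w hw)
        _ = ‖⟪v, applyWord X (i :: rest).reverse w⟫‖ := by
            rw [List.reverse_cons, applyWord_append]; rfl
  constructor
  · -- (i) → (ii), via Cauchy–Schwarz
    rintro ⟨C, A, hC, hA, hbd⟩
    refine ⟨C * (‖u‖ + 1), A, by positivity, hA, fun α hα => ?_⟩
    have h1 : ‖⟪applyWord X α u, u⟫‖ ≤ ‖applyWord X α u‖ * ‖u‖ := by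
      exact norm_inner_le_norm _ _
    have h2 : ‖applyWord X α u‖ * ‖u‖ ≤ (C * A ^ α.length * ∏ j, m j (α.count j)) * (‖u‖ + 1) := by
      have := hbd α hα
      have h3 : (0:ℝ) ≤ ‖u‖ := norm_nonneg u
      have hp : (0:ℝ) < C * A ^ α.length * ∏ j, m j (α.count j) := by
        have : (0:ℝ) < ∏ j, m j (α.count j) := Finset.prod_pos fun j _ => hmpos j _
        positivity
      nlinarith [norm_nonneg (applyWord X α u)]
    calc ‖⟪applyWord X α u, u⟫‖ ≤ (C * A ^ α.length * ∏ j, m j (α.count j)) * (‖u‖ + 1) :=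
          h1.trans h2
      _ = C * (‖u‖ + 1) * A ^ α.length * ∏ j, m j (α.count j) := by ring
  · -- (ii) → (i)
    rintro ⟨C, A, hC, hA, hbd⟩
    refine ⟨Real.sqrt C, A * H, Real.sqrt_pos.mpr hC, by positivity, fun α hα => ?_⟩
    set k := α.length with hk
    set β := α.reverse ++ α with hβ
    have hβne : β ≠ [] := by
      simp [hβ, hα]
    have hβlen : β.length = 2 * k := by
      simp [hβ, hk, two_mul]
    have hβcount : ∀ j, β.count j = 2 * α.count j := by
      intro j; simp [hβ, List.count_append, List.count_reverse, two_mul]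
    -- ‖X_α u‖² = |⟪X_β u, u⟫|
    have hsq : ‖applyWord X α u‖ ^ 2 = ‖⟪applyWord X β u, u⟫‖ := by
      have e1 : ‖⟪applyWord X α u, applyWord X α u⟫‖
          = ‖⟪u, applyWord X β u⟫‖ := by
        have := habs α u (applyWord X α u) hu (hmem α u hu)
        rw [this, hβ, applyWord_append]
      have e2 : ‖⟪u, applyWord X β u⟫‖ = ‖⟪applyWord X β u, u⟫‖ := by
        rw [← inner_conj_symm, Complex.norm_conj]
      have e3 : (⟪applyWord X α u, applyWord X α u⟫ : ℂ) = (‖applyWord X α u‖ : ℂ) ^ 2 :=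
        inner_self_eq_norm_sq_to_K _
      rw [← e2, ← e1, e3]
      simp [sq_abs]
    have hmprod : (∏ j, m j (β.count j)) ≤ H ^ (2 * k) * (∏ j, m j (α.count j)) ^ 2 := by
      have step : ∀ j : Fin n, m j (β.count j) ≤ H ^ (2 * α.count j) * m j (α.count j) ^ 2 := by
        intro j
        have := hA2 j (α.count j) (α.count j)
        rw [hβcount j]
        calc m j (2 * α.count j) = m j (α.count j + α.count j) := by rw [two_mul]
          _ ≤ H ^ (α.count j + α.count j) * m j (α.count j) * m j (α.count j) := this
          _ = H ^ (2 * α.count j) * m j (α.count j) ^ 2 := by rw [two_mul]; ring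
      calc (∏ j, m j (β.count j)) ≤ ∏ j, (H ^ (2 * α.count j) * m j (α.count j) ^ 2) :=
            Finset.prod_le_prod (fun j _ => (hmpos j _).le) (fun j _ => step j)
        _ = (∏ j, H ^ (2 * α.count j)) * ∏ j, m j (α.count j) ^ 2 := Finset.prod_mul_distrib
        _ = H ^ (2 * k) * (∏ j, m j (α.count j)) ^ 2 := by
            rw [Finset.prod_pow_eq_pow_sum, ← Finset.mul_sum, sum_count_eq_length,
              ← Finset.prod_pow]
    have hprodpos : (0:ℝ) < ∏ j, m j (α.count j) := Finset.prod_pos fun j _ => hmpos j _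
    have hbound : ‖applyWord X α u‖ ^ 2
        ≤ C * ((A * H) ^ k * ∏ j, m j (α.count j)) ^ 2 := by
      rw [hsq]
      calc ‖⟪applyWord X β u, u⟫‖ ≤ C * A ^ β.length * ∏ j, m j (β.count j) :=
            hbd β hβne
        _ ≤ C * A ^ (2 * k) * (H ^ (2 * k) * (∏ j, m j (α.count j)) ^ 2) := by
            rw [hβlen]
            exact mul_le_mul_of_nonneg_left hmprod (by positivity)
        _ = C * ((A * H) ^ k * ∏ j, m j (α.count j)) ^ 2 := by
            rw [pow_mul, pow_mul]; ring
    have hy : (0:ℝ) < (A * H) ^ k * ∏ j, m j (α.count j) := by positivity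
    have := Real.sqrt_le_sqrt hbound
    rwa [Real.sqrt_sq (norm_nonneg _), Real.sqrt_mul hC.le, Real.sqrt_sq hy.le,
      ← mul_assoc] at this
end
end

section
/- Let n ≥ 1 and let m = (m_p) and q = (q_p) be sequences of positive reals, each logarithmically convex with m_0 = m_1 = 1 and q_0 = q_1 = 1, and suppose the pair (m, q) satisfies (A3) with constant L ≥ 1. Then for every integer i ≥ 1, setting ν = ⌊(i−1)/n⌋, for all integers a ≥ ν and b ≥ ν one has (i−1)·m_a·q_b ≤ 2nL·m_{a+1}·q_{b+1}. -/
/-- Ratio monotonicity for a log-convex positive sequence. -/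
lemma ratio_mono_aux (m : ℕ → ℝ) (hpos : ∀ p, 0 < m p)
    (hlc : ∀ p : ℕ, 1 ≤ p → (m p) ^ 2 ≤ m (p - 1) * m (p + 1)) :
    ∀ c d : ℕ, c ≤ d → m (c + 1) * m d ≤ m c * m (d + 1) := by
  intro c d hcd
  induction d, hcd using Nat.le_induction with
  | base => exact le_of_eq (mul_comm _ _)
  | succ d hcd ih =>
    have h1 := hlc (d + 1) (by omega)
    simp only [Nat.add_sub_cancel] at h1
    nlinarith [hpos c, hpos (c+1), hpos d, hpos (d+1), hpos (d+2),
      mul_le_mul_of_nonneg_right ih (le_of_lt (hpos (d+1))),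
      mul_le_mul_of_nonneg_left h1 (le_of_lt (hpos c))]

/-- the combinatorial estimate in the proof of Proposition 2.4.
For logarithmically convex positive sequences `m, q` with `m₀ = m₁ = q₀ = q₁ = 1`
satisfying (A3) with constant `L ≥ 1`, for every `i ≥ 1`, setting `ν = ⌊(i-1)/n⌋`,
one has `(i-1) mₐ q_b ≤ 2nL m_{a+1} q_{b+1}` whenever `a, b ≥ ν`. -/
theorem logconvex_A3_estimate (n : ℕ) (hn : 1 ≤ n)
    (m q : ℕ → ℝ)
    (hmpos : ∀ p, 0 < m p) (hqpos : ∀ p, 0 < q p)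
    (hmlc : ∀ p : ℕ, 1 ≤ p → (m p) ^ 2 ≤ m (p - 1) * m (p + 1))
    (hqlc : ∀ p : ℕ, 1 ≤ p → (q p) ^ 2 ≤ q (p - 1) * q (p + 1))
    (hm0 : m 0 = 1) (hm1 : m 1 = 1) (hq0 : q 0 = 1) (hq1 : q 1 = 1)
    (L : ℝ) (hL : 1 ≤ L)
    (hA3 : ∀ p : ℕ, 1 ≤ p → (p : ℝ) * m (p - 1) * q (p - 1) ≤ L * m p * q p)
    (i : ℕ) (hi : 1 ≤ i) (a b : ℕ)
    (ha : (i - 1) / n ≤ a) (hb : (i - 1) / n ≤ b) :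
    ((i - 1 : ℕ) : ℝ) * m a * q b ≤ 2 * n * L * m (a + 1) * q (b + 1) := by
  set ν : ℕ := (i - 1) / n with hν
  have hA := hA3 (ν + 1) (Nat.le_add_left 1 ν)
  simp only [Nat.add_sub_cancel] at hA
  push_cast at hA
  have hra := ratio_mono_aux m hmpos hmlc ν a ha
  have hrb := ratio_mono_aux q hqpos hqlc ν b hb
  have hLpos : (0:ℝ) < L := lt_of_lt_of_le one_pos hL
  -- key : (ν+1) * m a * q b ≤ L * m (a+1) * q (b+1)
  have h2 : (((ν:ℝ) + 1) * m a * q b) * (m ν * q ν)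
      ≤ (L * m (a + 1) * q (b + 1)) * (m ν * q ν) := by
    calc (((ν:ℝ) + 1) * m a * q b) * (m ν * q ν)
        = (((ν:ℝ) + 1) * m ν * q ν) * (m a * q b) := by ring
      _ ≤ (L * m (ν + 1) * q (ν + 1)) * (m a * q b) := by
          apply mul_le_mul_of_nonneg_right hA (mul_pos (hmpos a) (hqpos b)).le
      _ = L * ((m (ν + 1) * m a) * (q (ν + 1) * q b)) := by ring
      _ ≤ L * ((m ν * m (a + 1)) * (q ν * q (b + 1))) := by
          apply mul_le_mul_of_nonneg_left _ (le_of_lt hLpos)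
          exact mul_le_mul hra hrb (mul_pos (hqpos (ν+1)) (hqpos b)).le (mul_pos (hmpos ν) (hmpos (a+1))).le
      _ = (L * m (a + 1) * q (b + 1)) * (m ν * q ν) := by ring
  have key : ((ν:ℝ) + 1) * m a * q b ≤ L * m (a + 1) * q (b + 1) :=
    le_of_mul_le_mul_right h2 (mul_pos (hmpos ν) (hqpos ν))
  -- i - 1 ≤ n * (ν + 1)
  have hnat : (i - 1 : ℕ) ≤ n * (ν + 1) := by
    have hdm := Nat.div_add_mod (i - 1) n
    have hmod : (i - 1) % n < n := Nat.mod_lt _ (by omega)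
    calc i - 1 = n * ν + (i - 1) % n := hdm.symm
      _ ≤ n * ν + n := by omega
      _ = n * (ν + 1) := by ring
  have hcast : ((i - 1 : ℕ) : ℝ) ≤ (n : ℝ) * ((ν:ℝ) + 1) := by
    have := (Nat.cast_le (α := ℝ)).mpr hnat
    push_cast at this
    linarith
  have hmq : 0 < m a * q b := mul_pos (hmpos a) (hqpos b)
  have hfin : (0:ℝ) ≤ (n : ℝ) * (L * m (a + 1) * q (b + 1)) := by
    have := hmpos (a+1); have := hqpos (b+1); positivity
  calc ((i - 1 : ℕ) : ℝ) * m a * q b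
      = ((i - 1 : ℕ) : ℝ) * (m a * q b) := by ring
    _ ≤ ((n : ℝ) * ((ν:ℝ) + 1)) * (m a * q b) := by
        apply mul_le_mul_of_nonneg_right hcast (le_of_lt hmq)
    _ = (n : ℝ) * (((ν:ℝ) + 1) * m a * q b) := by ring
    _ ≤ (n : ℝ) * (L * m (a + 1) * q (b + 1)) := by
        apply mul_le_mul_of_nonneg_left key (Nat.cast_nonneg n)
    _ ≤ 2 * n * L * m (a + 1) * q (b + 1) := by nlinarith [hfin]
end
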